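/- arXiv:1702.00518 — 3 statements merged into one kernel-verified Lean document; each statement's English description precedes it below -/
import Mathlib

section
/- Let γ : [0,1] → ℝ be continuously differentiable with γ(0) = 0 and γ(1) = 1. Define η^pu(t) = α·γ(t) + (1−α)·t and γ^pu(t) = β·γ(t) + (1−β)·t, AUC = ∫₀¹ γ(t) dt, and AUC^pu = ∫₀¹ γ^pu(t) · (d η^pu/dt)(t) dt. Then AUC^pu = (1 − (β − α))/2 + (β − α)·AUC. -/
/-!
Write `η = α γ + (1 - α) t` and `d = γ - t`, so that `d 0 = d 1 = 0`, `η' = 1 + α d'` and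
`β γ + (1 - β) t = η + (β - α) d`. The integrand becomes
`η η' + (β - α) d + α (β - α) d d'`, and the exact derivatives `η η' = (η² / 2)'` and
`d d' = (d² / 2)'` integrate to `1 / 2` and `0`, leaving `1 / 2 + (β - α) (AUC - 1 / 2)`.
-/

open Set intervalIntegral
open MeasureTheory (volume)

theorem integral_mul_deriv_self {f f' : ℝ → ℝ} {a b : ℝ}
    (hf : ∀ x ∈ uIcc a b, HasDerivAt f (f' x) x) (hf' : IntervalIntegrable f' volume a b) :
    ∫ x in a..b, f x * f' x = (f b ^ 2 - f a ^ 2) / 2 := by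
  have hparts := integral_mul_deriv_eq_deriv_mul hf hf hf' hf'
  simp only [mul_comm (f' _)] at hparts
  linarith

theorem intervalIntegrable_mul_deriv_self {f f' : ℝ → ℝ} {a b : ℝ}
    (hf : ∀ x ∈ uIcc a b, HasDerivAt f (f' x) x) (hf' : IntervalIntegrable f' volume a b) :
    IntervalIntegrable (fun x ↦ f x * f' x) volume a b :=
  hf'.continuousOn_mul (HasDerivAt.continuousOn hf)

theorem aucpu_formula (α β : ℝ) (γ γ' : ℝ → ℝ)
    (hderiv : ∀ t ∈ Set.Icc (0 : ℝ) 1, HasDerivAt γ (γ' t) t)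
    (hcont : ContinuousOn γ' (Set.Icc (0 : ℝ) 1))
    (h0 : γ 0 = 0) (h1 : γ 1 = 1) :
    (∫ t in (0 : ℝ)..1, (β * γ t + (1 - β) * t) * (α * γ' t + (1 - α))) =
      (1 - (β - α)) / 2 + (β - α) * ∫ t in (0 : ℝ)..1, γ t := by
  rw [← uIcc_of_le zero_le_one] at hderiv hcont
  set η : ℝ → ℝ := fun t ↦ α * γ t + (1 - α) * t
  set d : ℝ → ℝ := fun t ↦ γ t - t
  have hη : ∀ t ∈ uIcc (0 : ℝ) 1, HasDerivAt η (α * γ' t + (1 - α)) t := fun t ht ↦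
    (((hderiv t ht).const_mul α).add ((hasDerivAt_id' t).const_mul (1 - α))).congr_deriv
      (by rw [mul_one])
  have hd : ∀ t ∈ uIcc (0 : ℝ) 1, HasDerivAt d (γ' t - 1) t := fun t ht ↦
    (hderiv t ht).sub (hasDerivAt_id' t)
  have hγ'i : IntervalIntegrable γ' volume 0 1 := hcont.intervalIntegrable
  have hη'i : IntervalIntegrable (fun t ↦ α * γ' t + (1 - α)) volume 0 1 :=
    (hγ'i.const_mul α).add intervalIntegrable_const
  have hd'i : IntervalIntegrable (fun t ↦ γ' t - 1) volume 0 1 :=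
    hγ'i.sub intervalIntegrable_const
  have hηη' := intervalIntegrable_mul_deriv_self hη hη'i
  have hdd' := intervalIntegrable_mul_deriv_self hd hd'i
  have hγi : IntervalIntegrable γ volume 0 1 :=
    (HasDerivAt.continuousOn hderiv).intervalIntegrable
  calc (∫ t in (0 : ℝ)..1, (β * γ t + (1 - β) * t) * (α * γ' t + (1 - α)))
      = ∫ t in (0 : ℝ)..1, (η t * (α * γ' t + (1 - α)) + α * (β - α) * (d t * (γ' t - 1)))
          + (β - α) * d t :=
        integral_congr fun t _ ↦ by ring
    _ = (∫ t in (0 : ℝ)..1, η t * (α * γ' t + (1 - α)))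
          + α * (β - α) * (∫ t in (0 : ℝ)..1, d t * (γ' t - 1))
          + (β - α) * ((∫ t in (0 : ℝ)..1, γ t) - ∫ t in (0 : ℝ)..1, t) := by
        rw [integral_add (hηη'.add (hdd'.const_mul _))
            ((hγi.sub intervalIntegrable_id).const_mul _), integral_add hηη' (hdd'.const_mul _), integral_const_mul, integral_const_mul,
          integral_sub hγi intervalIntegrable_id]
    _ = (1 - (β - α)) / 2 + (β - α) * ∫ t in (0 : ℝ)..1, γ t := by
        rw [integral_mul_deriv_self hη hη'i, integral_mul_deriv_self hd hd'i, integral_id]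
        simp only [η, d, h0, h1]
        ring
end

section
/- Suppose E₁, E₀ ≥ 0, α ∈ (0,1), β ∈ (α,1], c ∈ (0,1), E_f = α·E₁ + (1−α)·E₀ > 0, E_g = β·E₁ + (1−β)·E₀, ρ = α·E₁/E_f, and ρ^pu = c·E_g/(c·E_g + (1−c)·E_f). Then ρ = (α·(1−α)/(β−α))·(((1−c)/c)·(ρ^pu/(1−ρ^pu)) − (1−β)/(1−α)). -/
/-! Rescaling the PU odds `ρpu / (1 - ρpu)` by `(1 - c) / c` gives `Eg / Ef`, and two mixtures of
`E1`, `E0` with different weights `α ≠ β` can be solved for `E1`. -/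

theorem div_div_one_sub_div_add {K : Type*} [Field K] {a b : K} (hab : a + b ≠ 0) :
    a / (a + b) / (1 - a / (a + b)) = a / b := by
  have hcompl : 1 - a / (a + b) = b / (a + b) := by
    field_simp
    ring
  rw [hcompl, div_div_div_cancel_right₀ hab]

/-- Eliminating `y` gives `(β - α) x = (1 - α) g - (1 - β) f`. -/
theorem mul_div_mixture_eq {K : Type*} [Field K] {α β x y f g : K}
    (hf : f = α * x + (1 - α) * y) (hg : g = β * x + (1 - β) * y)
    (hf0 : f ≠ 0) (hα : 1 - α ≠ 0) (hαβ : β - α ≠ 0) :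
    α * x / f = α * (1 - α) / (β - α) * (g / f - (1 - β) / (1 - α)) := by
  subst hf hg
  field_simp
  ring

theorem precision_recovery (α β c E1 E0 Ef Eg ρ ρpu : ℝ)
    (hE1 : 0 ≤ E1) (hE0 : 0 ≤ E0)
    (hα0 : 0 < α) (hα1 : α < 1) (hβ1 : α < β) (hβ2 : β ≤ 1)
    (hc0 : 0 < c) (hc1 : c < 1)
    (hf : Ef = α * E1 + (1 - α) * E0) (hEf : 0 < Ef)
    (hg : Eg = β * E1 + (1 - β) * E0)
    (hρ : ρ = α * E1 / Ef)
    (hρpu : ρpu = c * Eg / (c * Eg + (1 - c) * Ef)) :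
    ρ = (α * (1 - α) / (β - α)) *
      (((1 - c) / c) * (ρpu / (1 - ρpu)) - (1 - β) / (1 - α)) := by
  have hEg : 0 ≤ Eg := hg ▸ add_nonneg (mul_nonneg (by linarith) hE1) (mul_nonneg (by linarith) hE0)
  have hc_compl : 1 - c ≠ 0 := by linarith
  have hD : c * Eg + (1 - c) * Ef ≠ 0 :=
    (add_pos_of_nonneg_of_pos (mul_nonneg hc0.le hEg) (mul_pos (sub_pos.2 hc1) hEf)).ne'
  have hodds : ρpu / (1 - ρpu) = c * Eg / ((1 - c) * Ef) := hρpu ▸ div_div_one_sub_div_add hD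
  have hrescaled : (1 - c) / c * (ρpu / (1 - ρpu)) = Eg / Ef := by
    rw [hodds]
    field_simp
  rw [hrescaled, hρ]
  exact mul_div_mixture_eq hf hg hEf.ne' (by linarith) (by linarith)
end

section
/- Let γ : [0,1] → ℝ be continuously differentiable with γ(0)=0, γ(1)=1, and let 0 ≤ α < β ≤ 1 with β − α < 1. Define AUC = ∫₀¹ γ(t) dt and AUC^pu = (1−(β−α))/2 + (β−α)·AUC. If γ(t) ≥ t for all t ∈ [0,1] with strict inequality on a set of positive measure (so AUC > 1/2), then AUC^pu < AUC. -/
open MeasureTheory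

theorem aucpu_underestimates (α β : ℝ) (γ γ' : ℝ → ℝ)
    (hderiv : ∀ t ∈ Set.Icc (0 : ℝ) 1, HasDerivAt γ (γ' t) t)
    (hcont : ContinuousOn γ' (Set.Icc (0 : ℝ) 1))
    (h0 : γ 0 = 0) (h1 : γ 1 = 1)
    (hα : 0 ≤ α) (hαβ : α < β) (hβ : β ≤ 1) (hlt : β - α < 1)
    (hge : ∀ t ∈ Set.Icc (0 : ℝ) 1, t ≤ γ t)
    (hpos : 0 < volume {t ∈ Set.Icc (0 : ℝ) 1 | t < γ t}) :
    (1 - (β - α)) / 2 + (β - α) * ∫ t in (0 : ℝ)..1, γ t <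
      ∫ t in (0 : ℝ)..1, γ t := by
  have hγc : ContinuousOn γ (Set.Icc (0 : ℝ) 1) := fun t ht =>
    (hderiv t ht).continuousAt.continuousWithinAt
  set f : ℝ → ℝ := fun t => γ t - t with hf
  have hfc : ContinuousOn f (Set.Icc (0 : ℝ) 1) := hγc.sub continuousOn_id
  have hint : IntegrableOn f (Set.Ioc (0 : ℝ) 1) volume :=
    (hfc.integrableOn_Icc).mono_set Set.Ioc_subset_Icc_self
  have hnn : 0 ≤ᵐ[volume.restrict (Set.Ioc (0 : ℝ) 1)] f := by
    filter_upwards [ae_restrict_mem measurableSet_Ioc] with t ht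
    have := hge t (Set.Ioc_subset_Icc_self ht)
    simp [hf]; linarith
  have hsub : {t ∈ Set.Icc (0 : ℝ) 1 | t < γ t} ⊆
      Function.support f ∩ Set.Ioc (0 : ℝ) 1 := by
    rintro t ⟨ht, hlt'⟩
    have ht0 : t ≠ 0 := by
      rintro rfl; rw [h0] at hlt'; exact lt_irrefl 0 hlt'
    exact ⟨by simp [hf]; linarith, lt_of_le_of_ne ht.1 (Ne.symm ht0), ht.2⟩
  have hposint : 0 < ∫ t in Set.Ioc (0 : ℝ) 1, f t := by
    rw [setIntegral_pos_iff_support_of_nonneg_ae hnn hint]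
    exact lt_of_lt_of_le hpos (measure_mono hsub)
  have hsplit : (∫ t in (0:ℝ)..1, f t) =
      (∫ t in (0:ℝ)..1, γ t) - ∫ t in (0:ℝ)..1, t := by
    rw [intervalIntegral.integral_sub]
    · exact ContinuousOn.intervalIntegrable (by
        rwa [Set.uIcc_of_le (by norm_num : (0:ℝ) ≤ 1)])
    · exact continuous_id.intervalIntegrable 0 1
  have hid : (∫ t in (0:ℝ)..1, t) = 1/2 := by simp
  have h2 : (1:ℝ)/2 < ∫ t in (0:ℝ)..1, γ t := by
    have : (∫ t in (0:ℝ)..1, f t) = ∫ t in Set.Ioc (0 : ℝ) 1, f t :=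
      intervalIntegral.integral_of_le (by norm_num)
    rw [this] at hsplit
    rw [hid] at hsplit
    linarith
  nlinarith [h2, hlt, sub_pos.mpr hαβ]
end
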